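/- arXiv:2405.16022 — 2 statements merged into one kernel-verified Lean document; each statement's English description precedes it below -/
import Mathlib

section
/- In the ring R = Z_16, the ideal I = 4Z_16 is essential but not maximal, δ(R) = 2Z_16, δ(I) = 8Z_16 (Zhou radical of I as a ring without identity), and I ∩ δ(R) = I is not contained in δ(I). -/
open MulOpposite

/-- A right ideal `I` of `R` is essential if it intersects every nonzero right ideal
nontrivially. Right ideals are formalized as submodules of `R` over `Rᵐᵒᵖ`. -/
def IsEssentialRI (R : Type*) [Ring R] (I : Submodule Rᵐᵒᵖ R) : Prop :=
  ∀ K : Submodule Rᵐᵒᵖ R, K ≠ ⊥ → I ⊓ K ≠ ⊥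

/-- The Zhou radical of a ring `R`: the intersection of all essential maximal right
ideals of `R` (all of `R` if there are none). -/
def zhouRadical (R : Type*) [Ring R] : Set R :=
  {x : R | ∀ I : Submodule Rᵐᵒᵖ R, IsCoatom I → IsEssentialRI R I → x ∈ I}

/-- `J` is a right ideal of the (possibly non-unital) ring given by the subset `I` of `R`:
`J ⊆ I`, `J` is an additive subgroup, and `J` is closed under right multiplication by
elements of `I`. -/
def IsRI {R : Type*} [Ring R] (I J : Set R) : Prop :=
  J ⊆ I ∧ (0 : R) ∈ J ∧ (∀ a ∈ J, ∀ b ∈ J, a + b ∈ J) ∧ (∀ a ∈ J, -a ∈ J) ∧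
    ∀ a ∈ J, ∀ y ∈ I, a * y ∈ J

/-- `J` is a maximal right ideal of the ring given by the subset `I`. -/
def IsMaxRI {R : Type*} [Ring R] (I J : Set R) : Prop :=
  IsRI I J ∧ J ≠ I ∧ ∀ K : Set R, IsRI I K → J ⊆ K → K = J ∨ K = I

/-- `J` is an essential right ideal of the ring given by the subset `I`: it intersects
every nonzero right ideal of `I` nontrivially. -/
def IsEssRI {R : Type*} [Ring R] (I J : Set R) : Prop :=
  ∀ K : Set R, IsRI I K → K ≠ ({0} : Set R) → J ∩ K ≠ ({0} : Set R)

/-- The Zhou radical of the (possibly non-unital) ring given by the subset `I` of `R`: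
the intersection of all essential maximal right ideals of `I`. -/
def zhouSet {R : Type*} [Ring R] (I : Set R) : Set R :=
  {x : R | x ∈ I ∧ ∀ J : Set R, IsMaxRI I J → IsEssRI I J → x ∈ J}

/-!
`ℤ/16` is a chain ring whose ideals are `2ⁱℤ/16`; moreover every additive subgroup of `ℤ/nℤ` is
closed under multiplication, so right ideals of any subset are ideals of `ℤ/16`. Hence `2ℤ/16` is
the unique maximal right ideal of `R`, and it is essential because every nonzero ideal contains
`8`; thus `δ(R) = 2R`. As a ring without identity, `I = 4R` has right ideals `0 ⊂ 8R ⊂ I` only,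
so `δ(I) = 8R`, which does not contain `4 ∈ I ∩ δ(R)`.
-/

section Ring

variable {R : Type*} [Ring R]

theorem isRI_setOf_dvd {I : Set R} {a : R} (h : {x | a ∣ x} ⊆ I) : IsRI I {x | a ∣ x} :=
  ⟨h, dvd_zero a, fun _ ha _ hb => dvd_add ha hb, fun _ ha => (dvd_neg).2 ha,
    fun _ ha y _ => dvd_mul_of_dvd_left ha y⟩

def IsRI.toAddSubgroup {I J : Set R} (h : IsRI I J) : AddSubgroup R where
  carrier := J
  zero_mem' := h.2.1
  add_mem' ha hb := h.2.2.1 _ ha _ hb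
  neg_mem' ha := h.2.2.2.1 _ ha

def IsRI.toSubmodule {J : Set R} (h : IsRI Set.univ J) : Submodule Rᵐᵒᵖ R where
  toAddSubmonoid := h.toAddSubgroup.toAddSubmonoid
  smul_mem' c x (hx : x ∈ J) := h.2.2.2.2 x hx c.unop trivial

theorem Submodule.isRI_univ (K : Submodule Rᵐᵒᵖ R) : IsRI Set.univ (K : Set R) :=
  ⟨Set.subset_univ _, K.zero_mem, fun _ ha _ hb => K.add_mem ha hb, fun _ ha => K.neg_mem ha,
    fun _ ha y _ => K.smul_mem (op y) ha⟩

theorem IsEssRI.of_forall_mem {I J : Set R} {s : R} (hs : s ∈ J) (hs0 : s ≠ 0)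
    (h : ∀ K, IsRI I K → K ≠ {0} → s ∈ K) : IsEssRI I J :=
  fun K hK hne hJK => hs0 (hJK ▸ ⟨hs, h K hK hne⟩ : s ∈ ({0} : Set R))

theorem IsEssRI.isEssentialRI {M : Submodule Rᵐᵒᵖ R} (h : IsEssRI Set.univ (M : Set R)) :
    IsEssentialRI R M := by
  intro K hK hMK
  refine h K K.isRI_univ (fun hK0 => hK (SetLike.coe_injective hK0)) ?_
  rw [← Submodule.coe_inf, hMK, Submodule.bot_coe]

theorem not_isMaxRI_of_ssubset {I J K : Set R} (hK : IsRI I K) (hJK : J ⊂ K) (hKI : K ≠ I) :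
    ¬ IsMaxRI I J := by
  rintro ⟨-, -, hmax⟩
  rcases hmax K hK hJK.subset with h | h
  · exact hJK.ne h.symm
  · exact hKI h

section Unique

variable {I J : Set R} (hJ : IsRI I J) (hJI : J ≠ I) (h : ∀ K, IsRI I K → K ⊆ J ∨ K = I)
include hJ hJI h

theorem isMaxRI_of_forall_subset_or_eq : IsMaxRI I J :=
  ⟨hJ, hJI, fun K hK hJK => (h K hK).imp (fun hKJ => hKJ.antisymm hJK) id⟩

theorem IsMaxRI.eq_of_forall_subset_or_eq {J' : Set R} (hJ' : IsMaxRI I J') : J' = J := by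
  have hJ'J : J' ⊆ J := (h J' hJ'.1).resolve_right hJ'.2.1
  exact ((hJ'.2.2 J hJ hJ'J).resolve_right hJI).symm

theorem zhouSet_eq_of_forall_subset_or_eq (hess : IsEssRI I J) : zhouSet I = J := by
  ext x
  refine ⟨fun hx => hx.2 J (isMaxRI_of_forall_subset_or_eq hJ hJI h) hess,
    fun hx => ⟨hJ.1 hx, fun J' hJ' _ => ?_⟩⟩
  rwa [hJ'.eq_of_forall_subset_or_eq hJ hJI h]

end Unique

theorem zhouRadical_eq_of_forall_le_or_eq_top {M : Submodule Rᵐᵒᵖ R} (hM : M ≠ ⊤)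
    (hess : IsEssentialRI R M) (h : ∀ K : Submodule Rᵐᵒᵖ R, K ≤ M ∨ K = ⊤) :
    zhouRadical R = M := by
  have hcoatom : IsCoatom M := ⟨hM, fun K hK => (h K).resolve_left hK.not_ge⟩
  ext x
  refine ⟨fun hx => hx M hcoatom hess, fun hx I hI _ => ?_⟩
  have hIM : I ≤ M := (h I).resolve_right hI.1
  rwa [((hI.le_iff.1 hIM).resolve_left hM).symm]

end Ring

section ZMod

theorem IsRI.mem_of_dvd {n : ℕ} {I K : Set (ZMod n)} (hK : IsRI I K) {a b : ZMod n}
    (ha : a ∈ K) (hab : a ∣ b) : b ∈ K := by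
  obtain ⟨c, rfl⟩ := hab
  rw [← ZMod.intCast_zmod_cast c, mul_comm, ← zsmul_eq_mul]
  exact hK.toAddSubgroup.zsmul_mem ha _

theorem IsRI.subset_or_eq_of_forall_dvd {n : ℕ} {I J K : Set (ZMod n)} (hK : IsRI I K)
    (h : ∀ a ∈ I, a ∉ J → ∀ b ∈ I, a ∣ b) : K ⊆ J ∨ K = I := by
  by_cases hKJ : K ⊆ J
  · exact Or.inl hKJ
  obtain ⟨a, haK, haJ⟩ := Set.not_subset.1 hKJ
  exact Or.inr (hK.1.antisymm fun b hb => hK.mem_of_dvd haK (h a (hK.1 haK) haJ b hb))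

theorem ZMod16.eight_mem_of_isRI {I K : Set (ZMod 16)} (hK : IsRI I K) (hne : K ≠ {0}) :
    (8 : ZMod 16) ∈ K := by
  obtain ⟨a, haK, ha0⟩ : ∃ a ∈ K, a ≠ 0 := by
    by_contra! h
    exact hne (Set.eq_singleton_iff_unique_mem.2 ⟨hK.2.1, h⟩)
  exact hK.mem_of_dvd haK ((by decide : ∀ a : ZMod 16, a ≠ 0 → a ∣ 8) a ha0)

theorem ZMod16.isEssRI_setOf_dvd {I : Set (ZMod 16)} {d : ZMod 16} (hd : d ∣ 8) :
    IsEssRI I {x | d ∣ x} :=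
  IsEssRI.of_forall_mem hd (by decide) fun _ hK hne => eight_mem_of_isRI hK hne

def ZMod16.maximalIdeal : Submodule (ZMod 16)ᵐᵒᵖ (ZMod 16) :=
  (isRI_setOf_dvd (Set.subset_univ {x : ZMod 16 | 2 ∣ x})).toSubmodule

theorem ZMod16.zhouRadical_eq : zhouRadical (ZMod 16) = {x | 2 ∣ x} := by
  refine zhouRadical_eq_of_forall_le_or_eq_top (M := maximalIdeal) ?_
    (isEssRI_setOf_dvd (by decide)).isEssentialRI fun K => ?_
  · exact fun h => (by decide : ¬ (2 : ZMod 16) ∣ 1) (h ▸ Submodule.mem_top : (1 : ZMod 16) ∈ _)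
  · refine (K.isRI_univ.subset_or_eq_of_forall_dvd fun a _ ha b _ => ?_).imp id
      Submodule.coe_eq_univ.1
    exact ((by decide : ∀ a : ZMod 16, ¬ 2 ∣ a → a ∣ 1) a ha).trans (one_dvd b)

theorem ZMod16.zhouSet_setOf_four_dvd : zhouSet {x : ZMod 16 | 4 ∣ x} = {x | 8 ∣ x} := by
  refine zhouSet_eq_of_forall_subset_or_eq
    (isRI_setOf_dvd fun _ => dvd_trans (by decide)) ?_ (fun K hK => ?_) (isEssRI_setOf_dvd dvd_rfl)
  · exact fun h => (by decide : ¬ (8 : ZMod 16) ∣ 4) ((Set.ext_iff.1 h 4).2 dvd_rfl)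
  · refine hK.subset_or_eq_of_forall_dvd fun a ha ha8 b hb => ?_
    exact ((by decide : ∀ a : ZMod 16, 4 ∣ a → ¬ 8 ∣ a → a ∣ 4) a ha ha8).trans hb

end ZMod

/-- In `R = ℤ/16ℤ` with `I = 4R`: `I` is essential but not maximal, `δ(R) = 2R`,
`δ(I) = 8R` (Zhou radical of `I` as a ring without identity), and
`I ∩ δ(R) = I` is not contained in `δ(I)`. -/
theorem zmod16_zhou_example :
    IsEssRI (Set.univ : Set (ZMod 16)) {x : ZMod 16 | ∃ y, x = 4 * y} ∧
    ¬ IsMaxRI (Set.univ : Set (ZMod 16)) {x : ZMod 16 | ∃ y, x = 4 * y} ∧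
    zhouRadical (ZMod 16) = {x : ZMod 16 | ∃ y, x = 2 * y} ∧
    zhouSet {x : ZMod 16 | ∃ y, x = 4 * y} = {x : ZMod 16 | ∃ y, x = 8 * y} ∧
    {x : ZMod 16 | ∃ y, x = 4 * y} ∩ zhouRadical (ZMod 16) =
      {x : ZMod 16 | ∃ y, x = 4 * y} ∧
    ¬ ({x : ZMod 16 | ∃ y, x = 4 * y} ∩ zhouRadical (ZMod 16) ⊆
        zhouSet {x : ZMod 16 | ∃ y, x = 4 * y}) := by
  simp only [← dvd_def]
  have hI : {x : ZMod 16 | 4 ∣ x} ⊆ {x | 2 ∣ x} := fun _ => dvd_trans (by decide)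
  have hδR := ZMod16.zhouRadical_eq
  have hδI := ZMod16.zhouSet_setOf_four_dvd
  refine ⟨ZMod16.isEssRI_setOf_dvd (by decide), ?_, hδR, hδI, ?_, ?_⟩
  · refine not_isMaxRI_of_ssubset (isRI_setOf_dvd (Set.subset_univ _))
      (hI.ssubset_of_not_subset fun h => (by decide : ¬ (4 : ZMod 16) ∣ 2) (h dvd_rfl))
      fun h => (by decide : ¬ (2 : ZMod 16) ∣ 1) ((Set.ext_iff.1 h 1).2 trivial)
  · rw [hδR]
    exact Set.inter_eq_left.2 hI
  · rw [hδR, hδI, Set.inter_eq_left.2 hI]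
    exact fun h => (by decide : ¬ (8 : ZMod 16) ∣ 4) (h dvd_rfl)
end

section
/- Let R be a ring, e an idempotent of R, and S = {(r,s) ∈ R × R : r − s ∈ δ(R)}. Then R is Zhou right e-reduced if and only if S is Zhou right (e,e)-reduced. -/
open MulOpposite

/-!
Write `D = δ(R)` and `S` for the pullback ring. An essential maximal right ideal of `R` pulls
back along the first projection `S → R` (surjective, via the diagonal) to an essential maximal
right ideal of `S`, so first coordinates of elements of `δ(S)` lie in `D`; with `p = (a, a)` this
gives `⇐`. For `⇒` it suffices that `D × D ⊆ δ(S)`, and by the swap symmetry of `S` that every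
essential maximal right ideal `J` of `S` contains `0 × D`. Otherwise `E = {x ∈ D | (0, x) ∈ J}`
is an essential maximal submodule of `D_R`, and maximality of `J` gives `J + 0 × D = S`, so
`(1, 1 - δ) ∈ J` for some `δ ∈ D`. Then `(1 - δ) d ∈ E` for `d ∈ D`, and `δ d ∈ E` because `δ(R)`
lands in every essential maximal submodule under the linear map `x ↦ δ x`; hence `D ⊆ E`.
-/

open Pointwise

namespace Submodule

variable {A M N : Type*} [Ring A] [AddCommGroup M] [Module A M] [AddCommGroup N] [Module A N]

def IsEssential (I : Submodule A M) : Prop :=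
  ∀ K : Submodule A M, K ≠ ⊥ → I ⊓ K ≠ ⊥

theorem IsEssential.comap {I : Submodule A N} (hI : I.IsEssential) (f : M →ₗ[A] N) :
    (I.comap f).IsEssential := by
  intro K hK hbot
  by_cases hfK : K.map f = ⊥
  · have hK_le : K ≤ I.comap f := map_le_iff_le_comap.mp (hfK ▸ bot_le)
    exact hK (by rwa [inf_eq_right.mpr hK_le] at hbot)
  · obtain ⟨_, ⟨hyI, k, hk, rfl⟩, hy⟩ := (Submodule.ne_bot_iff _).mp (hI _ hfK)
    have hk' : k ∈ I.comap f ⊓ K := ⟨hyI, hk⟩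
    rw [hbot, mem_bot] at hk'
    exact hy (by rw [hk', map_zero])

end Submodule

section ZhouIdeal

variable {R : Type*} [Ring R]

variable (R) in
def zhouIdeal : Submodule Rᵐᵒᵖ R where
  carrier := zhouRadical R
  add_mem' ha hb I hI hI' := I.add_mem (ha I hI hI') (hb I hI hI')
  zero_mem' I _ _ := I.zero_mem
  smul_mem' r _ hx I hI hI' := I.smul_mem r (hx I hI hI')

theorem map_mem_of_mem_zhouIdeal {N : Type*} [AddCommGroup N] [Module Rᵐᵒᵖ N]
    (f : R →ₗ[Rᵐᵒᵖ] N) {E : Submodule Rᵐᵒᵖ N} (hE : IsCoatom E) (hE' : E.IsEssential)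
    {x : R} (hx : x ∈ zhouIdeal R) : f x ∈ E := by
  rcases Submodule.isCoatom_comap_or_eq_top f hE with hco | htop
  · exact hx _ hco (hE'.comap f)
  · exact (htop ▸ Submodule.mem_top : x ∈ E.comap f)

theorem mul_mem_zhouIdeal_left (a : R) {x : R} (hx : x ∈ zhouIdeal R) : a * x ∈ zhouIdeal R :=
  fun _ hI hI' => map_mem_of_mem_zhouIdeal (DistribSMul.toLinearMap Rᵐᵒᵖ R a) hI hI' hx

theorem mul_mem_zhouIdeal_right {x : R} (hx : x ∈ zhouIdeal R) (a : R) : x * a ∈ zhouIdeal R :=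
  (zhouIdeal R).smul_mem (op a) hx

end ZhouIdeal

section RightIdealsOfSubsets

variable {T : Type*} [Ring T]

theorem IsRI.add {I J K : Set T} (hI : ∀ a ∈ I, ∀ b ∈ I, a + b ∈ I) (hJ : IsRI I J)
    (hK : IsRI I K) : IsRI I (J + K) := by
  obtain ⟨hJI, hJ0, hJadd, hJneg, hJmul⟩ := hJ
  obtain ⟨hKI, hK0, hKadd, hKneg, hKmul⟩ := hK
  refine ⟨?_, ⟨0, hJ0, 0, hK0, add_zero 0⟩, ?_, ?_, ?_⟩
  · rintro _ ⟨j, hj, k, hk, rfl⟩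
    exact hI _ (hJI hj) _ (hKI hk)
  · rintro _ ⟨j, hj, k, hk, rfl⟩ _ ⟨j', hj', k', hk', rfl⟩
    exact ⟨j + j', hJadd _ hj _ hj', k + k', hKadd _ hk _ hk', add_add_add_comm _ _ _ _⟩
  · rintro _ ⟨j, hj, k, hk, rfl⟩
    exact ⟨-j, hJneg _ hj, -k, hKneg _ hk, (neg_add _ _).symm⟩
  · rintro _ ⟨j, hj, k, hk, rfl⟩ y hy
    exact ⟨j * y, hJmul _ hj _ hy, k * y, hKmul _ hk _ hy, (add_mul _ _ _).symm⟩

section RingEquiv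

variable (σ : T ≃+* T) {I : Set T}

theorem symm_preimage_eq_of_preimage_eq (hI : σ ⁻¹' I = I) : σ.symm ⁻¹' I = I := by
  conv_lhs => rw [← hI]
  ext; simp

theorem IsRI.preimage (hI : σ ⁻¹' I = I) {J : Set T} (hJ : IsRI I J) : IsRI I (σ ⁻¹' J) := by
  obtain ⟨hJI, hJ0, hJadd, hJneg, hJmul⟩ := hJ
  refine ⟨fun x hx => hI ▸ hJI hx, by simpa using hJ0, ?_, ?_, ?_⟩
  · intro a ha b hb
    simpa using hJadd _ ha _ hb
  · intro a ha
    simpa using hJneg _ ha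
  · intro a ha y hy
    rw [← hI] at hy
    simpa using hJmul _ ha _ hy

theorem IsMaxRI.preimage (hI : σ ⁻¹' I = I) {J : Set T} (hJ : IsMaxRI I J) :
    IsMaxRI I (σ ⁻¹' J) := by
  obtain ⟨hJRI, hJI, hJmax⟩ := hJ
  have hI' := symm_preimage_eq_of_preimage_eq σ hI
  refine ⟨hJRI.preimage σ hI, fun h => hJI ?_, fun K hK hJK => ?_⟩
  · rw [← hI', ← h]
    ext; simp
  · have hJK' : J ⊆ σ.symm ⁻¹' K := fun x hx => hJK (by simpa using hx)
    have hσK : σ ⁻¹' (σ.symm ⁻¹' K) = K := by ext; simp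
    rcases hJmax _ (hK.preimage σ.symm hI') hJK' with h | h
    · exact Or.inl (by rw [← hσK, h])
    · exact Or.inr (by rw [← hσK, h, hI])

theorem IsEssRI.preimage (hI : σ ⁻¹' I = I) {J : Set T} (hJ : IsEssRI I J) :
    IsEssRI I (σ ⁻¹' J) := by
  have hI' := symm_preimage_eq_of_preimage_eq σ hI
  have h0 : ∀ τ : T ≃+* T, τ ⁻¹' ({0} : Set T) = {0} := fun τ => by ext; simp
  intro K hK hK0 hJK
  refine hJ _ (hK.preimage σ.symm hI') (fun h => hK0 ?_) ?_
  · rw [← h0 σ, ← h]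
    ext; simp
  · rw [← h0 σ.symm, ← hJK]
    ext; simp

end RingEquiv

theorem IsRI.eq_of_one_mem {I J : Set T} (hJ : IsRI I J) (h1 : (1 : T) ∈ J) : J = I :=
  subset_antisymm hJ.1 fun y hy => by simpa using hJ.2.2.2.2 _ h1 _ hy

section Pullback

variable {R : Type*} [Ring R] (I : Subring T) (π : T →+* R) (M : Submodule Rᵐᵒᵖ R)

theorem isRI_pullback : IsRI I {t | t ∈ I ∧ π t ∈ M} := by
  refine ⟨fun t ht => ht.1, ⟨I.zero_mem, by simp⟩, ?_, ?_, ?_⟩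
  · exact fun a ha b hb => ⟨I.add_mem ha.1 hb.1, by simpa using M.add_mem ha.2 hb.2⟩
  · exact fun a ha => ⟨I.neg_mem ha.1, by simpa using M.neg_mem ha.2⟩
  · exact fun a ha y hy => ⟨I.mul_mem ha.1 hy, by simpa using M.smul_mem (op (π y)) ha.2⟩

variable {I π}

def IsRI.map {K : Set T} (hK : IsRI I K) (hπ : ∀ r, ∃ t ∈ I, π t = r) : Submodule Rᵐᵒᵖ R where
  carrier := π '' K
  add_mem' := by
    rintro _ _ ⟨a, ha, rfl⟩ ⟨b, hb, rfl⟩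
    exact ⟨a + b, hK.2.2.1 _ ha _ hb, map_add π a b⟩
  zero_mem' := ⟨0, hK.2.1, map_zero π⟩
  smul_mem' := by
    rintro r _ ⟨a, ha, rfl⟩
    obtain ⟨t, ht, hπt⟩ := hπ r.unop
    exact ⟨a * t, hK.2.2.2.2 _ ha _ ht, by rw [map_mul, hπt]; rfl⟩

theorem isMaxRI_pullback (hπ : ∀ r, ∃ t ∈ I, π t = r) (hM : IsCoatom M) :
    IsMaxRI I {t | t ∈ I ∧ π t ∈ M} := by
  refine ⟨isRI_pullback I π M, fun h => hM.1 ?_, fun K hK hMK => ?_⟩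
  · have h1 : π 1 ∈ M := (h ▸ I.one_mem : (1 : T) ∈ {t | t ∈ I ∧ π t ∈ M}).2
    rw [map_one] at h1
    exact Submodule.eq_top_iff'.mpr fun r => by simpa using M.smul_mem (op r) h1
  by_cases hKM : K ⊆ {t | t ∈ I ∧ π t ∈ M}
  · exact Or.inl (subset_antisymm hKM hMK)
  refine Or.inr (hK.eq_of_one_mem ?_)
  obtain ⟨p, hpK, hpJ⟩ := Set.not_subset.mp hKM
  have hpM : π p ∉ M := fun h => hpJ ⟨hK.1 hpK, h⟩
  have hsup : M ⊔ Submodule.span Rᵐᵒᵖ {π p} = ⊤ := codisjoint_iff.mp <|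
    hM.not_le_iff_codisjoint.mp (by rwa [Submodule.span_singleton_le_iff_mem])
  obtain ⟨m, hm, _, hy, hmy⟩ :=
    Submodule.mem_sup.mp (hsup ▸ Submodule.mem_top : (1 : R) ∈ M ⊔ Submodule.span Rᵐᵒᵖ {π p})
  obtain ⟨r, rfl⟩ := Submodule.mem_span_singleton.mp hy
  obtain ⟨t, ht, hπt⟩ := hπ r.unop
  have hpt : p * t ∈ K := hK.2.2.2.2 _ hpK _ ht
  have hrest : 1 - p * t ∈ K := hMK ⟨I.sub_mem I.one_mem (hK.1 hpt), by
    rw [map_sub, map_one, map_mul, hπt, ← hmy]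
    simpa using hm⟩
  simpa using hK.2.2.1 _ hrest _ hpt

theorem isEssRI_pullback (hπ : ∀ r, ∃ t ∈ I, π t = r) (hM : IsEssentialRI R M) :
    IsEssRI I {t | t ∈ I ∧ π t ∈ M} := by
  intro K hK hK0 hMK
  have hMK' : ∀ k ∈ K, π k ∈ M → k = 0 := fun k hk hkM =>
    (hMK.symm ▸ ⟨⟨hK.1 hk, hkM⟩, hk⟩ : k ∈ ({0} : Set T))
  by_cases hπK : hK.map hπ = ⊥
  · refine hK0 (Set.eq_singleton_iff_unique_mem.mpr ⟨hK.2.1, fun k hk => hMK' k hk ?_⟩)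
    have : π k ∈ hK.map hπ := ⟨k, hk, rfl⟩
    rw [hπK, Submodule.mem_bot] at this
    exact this ▸ M.zero_mem
  · obtain ⟨_, ⟨hkM, k, hk, rfl⟩, hk0⟩ := (Submodule.ne_bot_iff _).mp (hM _ hπK)
    exact hk0 (by rw [hMK' k hk hkM, map_zero])

theorem map_mem_zhouRadical_of_mem_zhouSet (hπ : ∀ r, ∃ t ∈ I, π t = r) {t : T}
    (ht : t ∈ zhouSet (I : Set T)) : π t ∈ zhouRadical R := fun M hM hM' =>
  (ht.2 _ (isMaxRI_pullback M hπ hM) (isEssRI_pullback M hπ hM')).2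

end Pullback

end RightIdealsOfSubsets

section ZhouPullback

variable {R : Type*} [Ring R]

variable (R) in
def zhouPullback : Subring (R × R) where
  carrier := {q | q.1 - q.2 ∈ zhouIdeal R}
  mul_mem' {p q} hp hq := by
    have h : p.1 * q.1 - p.2 * q.2 = p.1 * (q.1 - q.2) + (p.1 - p.2) * q.2 := by noncomm_ring
    change _ ∈ zhouIdeal R
    rw [Prod.fst_mul, Prod.snd_mul, h]
    exact add_mem (mul_mem_zhouIdeal_left p.1 hq) (mul_mem_zhouIdeal_right hp q.2)
  one_mem' := by simp
  add_mem' {p q} hp hq := by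
    have h : p.1 + q.1 - (p.2 + q.2) = (p.1 - p.2) + (q.1 - q.2) := by abel
    change _ ∈ zhouIdeal R
    rw [Prod.fst_add, Prod.snd_add, h]
    exact add_mem hp hq
  zero_mem' := by simp
  neg_mem' {p} hp := by
    have h : -p.1 - -p.2 = -(p.1 - p.2) := by abel
    change _ ∈ zhouIdeal R
    rw [Prod.fst_neg, Prod.snd_neg, h]
    exact neg_mem hp

theorem mem_zhouPullback {q : R × R} : q ∈ zhouPullback R ↔ q.1 - q.2 ∈ zhouIdeal R := Iff.rfl

theorem diag_mem_zhouPullback (r : R) : (r, r) ∈ zhouPullback R := by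
  simp [mem_zhouPullback]

theorem zero_mk_mem_zhouPullback {x : R} (hx : x ∈ zhouIdeal R) :
    ((0 : R), x) ∈ zhouPullback R := by
  simpa [mem_zhouPullback] using neg_mem hx

theorem prodComm_preimage_zhouPullback :
    RingEquiv.prodComm ⁻¹' (zhouPullback R : Set (R × R)) = zhouPullback R := by
  ext q
  simp only [Set.mem_preimage, SetLike.mem_coe, mem_zhouPullback]
  rw [← neg_mem_iff]
  simp

end ZhouPullback

section SecondSlice

variable {R : Type*} [Ring R] {J : Set (R × R)}

def IsRI.secondSlice (hJ : IsRI (zhouPullback R : Set (R × R)) J) :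
    Submodule Rᵐᵒᵖ (zhouIdeal R) where
  carrier := {x | ((0 : R), (x : R)) ∈ J}
  add_mem' {x y} hx hy := by simpa using hJ.2.2.1 _ hx _ hy
  zero_mem' := hJ.2.1
  smul_mem' r x hx := by
    simpa using hJ.2.2.2.2 _ hx _ (diag_mem_zhouPullback r.unop)

def zeroProd (K : Submodule Rᵐᵒᵖ (zhouIdeal R)) : Set (R × R) :=
  (fun k : zhouIdeal R => ((0 : R), (k : R))) '' K

theorem isRI_zeroProd (K : Submodule Rᵐᵒᵖ (zhouIdeal R)) :
    IsRI (zhouPullback R : Set (R × R)) (zeroProd K) := by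
  refine ⟨?_, ⟨0, K.zero_mem, rfl⟩, ?_, ?_, ?_⟩
  · rintro _ ⟨k, -, rfl⟩
    exact zero_mk_mem_zhouPullback k.2
  · rintro _ ⟨k, hk, rfl⟩ _ ⟨k', hk', rfl⟩
    exact ⟨k + k', K.add_mem hk hk', by simp⟩
  · rintro _ ⟨k, hk, rfl⟩
    exact ⟨-k, K.neg_mem hk, by simp⟩
  · rintro _ ⟨k, hk, rfl⟩ y -
    exact ⟨op y.2 • k, K.smul_mem _ hk, Prod.ext (zero_mul _).symm rfl⟩

theorem IsRI.isEssential_secondSlice (hJ : IsRI (zhouPullback R : Set (R × R)) J)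
    (hJe : IsEssRI (zhouPullback R : Set (R × R)) J) : hJ.secondSlice.IsEssential := by
  intro K hK hbot
  refine hJe _ (isRI_zeroProd K) (fun h => hK ?_) ?_
  · refine (Submodule.eq_bot_iff K).mpr fun k hk => ?_
    have : ((0 : R), (k : R)) ∈ zeroProd K := ⟨k, hk, rfl⟩
    rw [h] at this
    simpa [Prod.ext_iff] using this
  · refine Set.eq_singleton_iff_unique_mem.mpr ⟨⟨hJ.2.1, 0, K.zero_mem, rfl⟩, ?_⟩
    rintro _ ⟨hkJ, k, hk, rfl⟩
    have hk' : k ∈ hJ.secondSlice ⊓ K := ⟨hkJ, hk⟩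
    rw [hbot, Submodule.mem_bot] at hk'
    simp [hk']

theorem IsMaxRI.add_zeroProd_eq (hJ : IsMaxRI (zhouPullback R : Set (R × R)) J)
    {F : Submodule Rᵐᵒᵖ (zhouIdeal R)} (hF : hJ.1.secondSlice < F) :
    J + zeroProd F = zhouPullback R := by
  have hJF : J ⊆ J + zeroProd F := fun q hq => ⟨q, hq, 0, ⟨0, F.zero_mem, rfl⟩, add_zero q⟩
  refine (hJ.2.2 _ (hJ.1.add (fun _ ha _ hb => add_mem ha hb) (isRI_zeroProd F)) hJF).resolve_left
    fun h => ?_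
  obtain ⟨f, hfF, hfJ⟩ := SetLike.exists_of_lt hF
  have hf : ((0 : R), (f : R)) ∈ J + zeroProd F := ⟨0, hJ.1.2.1, _, ⟨f, hfF, rfl⟩, zero_add _⟩
  rw [h] at hf
  exact hfJ hf

theorem IsMaxRI.isCoatom_secondSlice (hJ : IsMaxRI (zhouPullback R : Set (R × R)) J)
    (hne : hJ.1.secondSlice ≠ ⊤) : IsCoatom hJ.1.secondSlice := by
  refine ⟨hne, fun F hF => Submodule.eq_top_iff'.mpr fun x => ?_⟩
  have hx := zero_mk_mem_zhouPullback x.2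
  rw [← SetLike.mem_coe, ← hJ.add_zeroProd_eq hF] at hx
  obtain ⟨q, hq, _, ⟨f, hf, rfl⟩, hqf⟩ := hx
  have hq' : q = ((0 : R), ((x - f : zhouIdeal R) : R)) := by
    rw [eq_sub_iff_add_eq.mpr hqf]; simp
  rw [hq'] at hq
  simpa using F.add_mem (hF.le hq) hf

theorem IsMaxRI.exists_one_sub_mem (hJ : IsMaxRI (zhouPullback R : Set (R × R)) J)
    (hne : hJ.1.secondSlice ≠ ⊤) : ∃ δ ∈ zhouIdeal R, ((1 : R), 1 - δ) ∈ J := by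
  have h1 := diag_mem_zhouPullback (1 : R)
  rw [← SetLike.mem_coe, ← hJ.add_zeroProd_eq hne.lt_top] at h1
  obtain ⟨q, hq, _, ⟨δ, -, rfl⟩, hqδ⟩ := h1
  refine ⟨δ, δ.2, ?_⟩
  rwa [eq_sub_iff_add_eq.mpr hqδ, Prod.mk_sub_mk, sub_zero] at hq

end SecondSlice

section ZhouSet

variable {R : Type*} [Ring R] {J : Set (R × R)}

theorem IsMaxRI.zero_mk_mem (hJ : IsMaxRI (zhouPullback R : Set (R × R)) J)
    (hJe : IsEssRI (zhouPullback R : Set (R × R)) J) {d : R} (hd : d ∈ zhouIdeal R) :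
    ((0 : R), d) ∈ J := by
  by_contra hdJ
  have hne : hJ.1.secondSlice ≠ ⊤ := fun h =>
    hdJ (show (⟨d, hd⟩ : zhouIdeal R) ∈ hJ.1.secondSlice from h ▸ Submodule.mem_top)
  obtain ⟨δ, hδ, hδJ⟩ := hJ.exists_one_sub_mem hne
  obtain ⟨-, -, hJadd, -, hJmul⟩ := hJ.1
  have hδd : ((0 : R), δ * d) ∈ J :=
    map_mem_of_mem_zhouIdeal ((DistribSMul.toLinearMap Rᵐᵒᵖ R δ).codRestrict (zhouIdeal R)
      fun x => mul_mem_zhouIdeal_right hδ x)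
      (hJ.isCoatom_secondSlice hne) (hJ.1.isEssential_secondSlice hJe) hd
  have hδd' : ((0 : R), (1 - δ) * d) ∈ J := by
    simpa using hJmul _ hδJ _ (zero_mk_mem_zhouPullback hd)
  exact hdJ (by simpa [← add_mul] using hJadd _ hδd _ hδd')

theorem IsMaxRI.mk_zero_mem (hJ : IsMaxRI (zhouPullback R : Set (R × R)) J)
    (hJe : IsEssRI (zhouPullback R : Set (R × R)) J) {d : R} (hd : d ∈ zhouIdeal R) :
    (d, (0 : R)) ∈ J := by
  simpa using (hJ.preimage _ prodComm_preimage_zhouPullback).zero_mk_mem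
    (hJe.preimage _ prodComm_preimage_zhouPullback) hd

theorem mk_mem_zhouSet_zhouPullback {a b : R} (ha : a ∈ zhouIdeal R) (hb : b ∈ zhouIdeal R) :
    (a, b) ∈ zhouSet (zhouPullback R : Set (R × R)) :=
  ⟨sub_mem ha hb, fun _ hJ hJe => by
    simpa using hJ.1.2.2.1 _ (hJ.mk_zero_mem hJe ha) _ (hJ.zero_mk_mem hJe hb)⟩

theorem fst_mem_zhouIdeal_of_mem_zhouSet {p : R × R}
    (hp : p ∈ zhouSet (zhouPullback R : Set (R × R))) : p.1 ∈ zhouIdeal R :=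
  map_mem_zhouRadical_of_mem_zhouSet (π := RingHom.fst R R)
    (fun r => ⟨(r, r), diag_mem_zhouPullback r, rfl⟩) hp

end ZhouSet

theorem zhou_right_e_reduced_iff_pullback_general (R : Type*) [Ring R]
    (e : R) :
    (∀ a : R, IsNilpotent a → a * e ∈ zhouRadical R) ↔
      (∀ p : R × R, p ∈ {q : R × R | q.1 - q.2 ∈ zhouRadical R} → IsNilpotent p →
        p * ((e, e) : R × R) ∈ zhouSet {q : R × R | q.1 - q.2 ∈ zhouRadical R}) := by
  change (∀ a : R, IsNilpotent a → a * e ∈ zhouIdeal R) ↔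
    ∀ p ∈ zhouPullback R, IsNilpotent p → p * (e, e) ∈ zhouSet (zhouPullback R : Set (R × R))
  constructor
  · rintro H ⟨a, b⟩ - hab
    exact mk_mem_zhouSet_zhouPullback (H a (hab.map (RingHom.fst R R)))
      (H b (hab.map (RingHom.snd R R)))
  · intro H a ha
    exact fst_mem_zhouIdeal_of_mem_zhouSet
      (H (a, a) (diag_mem_zhouPullback a) (ha.map ((RingHom.id R).prod (RingHom.id R))))

/-- A ring `R` is Zhou right `e`-reduced iff the subring
`S = {(r, s) ∈ R × R : r − s ∈ δ(R)}` is Zhou right `(e, e)`-reduced. -/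
theorem zhou_right_e_reduced_iff_pullback (R : Type*) [Ring R]
    (e : R) (he : IsIdempotentElem e) :
    (∀ a : R, IsNilpotent a → a * e ∈ zhouRadical R) ↔
      (∀ p : R × R, p ∈ {q : R × R | q.1 - q.2 ∈ zhouRadical R} → IsNilpotent p →
        p * ((e, e) : R × R) ∈ zhouSet {q : R × R | q.1 - q.2 ∈ zhouRadical R}) :=
  zhou_right_e_reduced_iff_pullback_general R e
end
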